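/- For n ∈ ℕ and real α > 0, z·M_{n,α}(z) = −(α/(n+1))·z·M'_{n+1,α−1}(z), and consequently z·(z·M_{n,α}(z))'/(z·M_{n,α}(z)) = 1 + z·M''_{n+1,α−1}(z)/M'_{n+1,α−1}(z) at every z where z·M_{n,α}(z) ≠ 0. -/

import Mathlib

/-- Pochhammer (rising factorial) symbol `(x)_k = x (x+1) ⋯ (x+k-1)`. -/
noncomputable def poch (x : ℝ) (k : ℕ) : ℝ := ∏ i ∈ Finset.range k, (x + i)

/-- Normalized Laguerre polynomial
`M_{n,α}(z) = Σ_{k=0}^{n} ((-1)^k n! / ((1+α)_k (n-k)! k!)) z^k`. -/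
noncomputable def M (n : ℕ) (α : ℝ) (z : ℂ) : ℂ :=
  ∑ k ∈ Finset.range (n + 1),
    (((-1 : ℝ) ^ k * n.factorial /
        (poch (1 + α) k * (n - k).factorial * k.factorial) : ℝ) : ℂ) * z ^ k

noncomputable def Md (m : ℕ) (β : ℝ) (z : ℂ) : ℂ :=
  ∑ k ∈ Finset.range (m + 1),
    (((-1 : ℝ) ^ k * m.factorial /
        (poch (1 + β) k * (m - k).factorial * k.factorial) : ℝ) : ℂ) * (k * z ^ (k - 1))

lemma poch_pos {x : ℝ} (hx : 0 < x) (k : ℕ) : 0 < poch x k :=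
  Finset.prod_pos fun i _ => by positivity

lemma poch_succ' (x : ℝ) (k : ℕ) : poch x (k + 1) = poch (x + 1) k * x := by
  unfold poch
  rw [Finset.prod_range_succ']
  congr 1
  · exact Finset.prod_congr rfl fun i _ => by push_cast; ring
  · simp

lemma M_hasDerivAt (m : ℕ) (β : ℝ) (z : ℂ) : HasDerivAt (M m β) (Md m β z) z := by
  unfold M Md
  exact HasDerivAt.fun_sum fun k _ => (hasDerivAt_pow k z).const_mul _

lemma deriv_M (m : ℕ) (β : ℝ) (z : ℂ) : deriv (M m β) z = Md m β z :=
  (M_hasDerivAt m β z).deriv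

lemma Md_diff (m : ℕ) (β : ℝ) (z : ℂ) : DifferentiableAt ℂ (Md m β) z := by
  unfold Md
  exact (HasDerivAt.fun_sum fun k _ =>
    (((hasDerivAt_pow (k - 1) z).const_mul (k : ℂ)).const_mul _)).differentiableAt

lemma aux_cancel (x P a N K g h : ℂ) (hP : P ≠ 0) (ha : a ≠ 0) (hN : N ≠ 0)
    (hK : K ≠ 0) (hg : g ≠ 0) (hh : h ≠ 0) :
    -(a / N) * ((-x * N) / (P * a * g * (K * h))) * K = x / (P * g * h) := by
  have e : -(a / N) * ((-x * N) / (P * a * g * (K * h))) * K =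
      (a * x * N * K) / (N * (P * a * g * (K * h))) := by ring
  rw [e, div_eq_div_iff (by simp_all) (by simp_all)]
  ring

lemma key (n : ℕ) (α : ℝ) (hα : α > 0) (z : ℂ) :
    M n α z = -((α : ℂ) / ((n : ℂ) + 1)) * Md (n + 1) (α - 1) z := by
  have hp : ∀ k, poch (1 + α) k ≠ 0 := fun k => (poch_pos (by linarith) k).ne'
  unfold M Md
  conv_rhs => rw [Finset.sum_range_succ']
  rw [mul_add]
  have h0 : -((α : ℂ) / ((n : ℂ) + 1)) *
      ((((-1 : ℝ) ^ 0 * (n+1).factorial /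
        (poch (1 + (α - 1)) 0 * ((n+1) - 0).factorial * (0:ℕ).factorial) : ℝ) : ℂ) *
        (((0:ℕ) : ℂ) * z ^ ((0:ℕ) - 1))) = 0 := by simp
  rw [h0, add_zero, Finset.mul_sum]
  refine Finset.sum_congr rfl fun k hk => ?_
  have hkn : (n + 1) - (k + 1) = n - k := Nat.succ_sub_succ n k
  have hk1 : (k + 1) - 1 = k := rfl
  have hpa : poch (1 + (α - 1)) (k + 1) = poch (1 + α) k * α := by
    have : (1 + (α - 1)) = α := by ring
    rw [this, poch_succ', add_comm α 1]
  rw [hkn, hk1, hpa, Nat.factorial_succ (n), Nat.factorial_succ k]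
  have hα' : (α : ℂ) ≠ 0 := by exact_mod_cast hα.ne'
  have hn1 : ((n : ℂ) + 1) ≠ 0 := Nat.cast_add_one_ne_zero n
  have hpk : ((poch (1 + α) k : ℝ) : ℂ) ≠ 0 := by exact_mod_cast hp k
  have hnf : ((n.factorial : ℝ) : ℂ) ≠ 0 := by exact_mod_cast (Nat.factorial_pos n).ne'
  have hnkf : (((n - k).factorial : ℝ) : ℂ) ≠ 0 := by
    exact_mod_cast (Nat.factorial_pos (n - k)).ne'
  have hkf : ((k.factorial : ℝ) : ℂ) ≠ 0 := by exact_mod_cast (Nat.factorial_pos k).ne'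
  have hk1' : ((k : ℂ) + 1) ≠ 0 := Nat.cast_add_one_ne_zero k
  push_cast
  rw [pow_succ]
  clear h0 hk
  generalize hN : ((n : ℂ) + 1) = N at hn1 ⊢
  generalize hKk : ((k : ℂ) + 1) = K at hk1' ⊢
  field_simp

theorem laguerre_starlike_convex_relation (n : ℕ) (α : ℝ) (hα : α > 0) :
    (∀ z : ℂ, z * M n α z = -((α : ℂ) / ((n : ℂ) + 1)) * z * deriv (M (n + 1) (α - 1)) z) ∧
    (∀ z : ℂ, z * M n α z ≠ 0 →
      z * deriv (fun w => w * M n α w) z / (z * M n α z) =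
        1 + z * iteratedDeriv 2 (M (n + 1) (α - 1)) z / deriv (M (n + 1) (α - 1)) z) := by
  set c : ℂ := -((α : ℂ) / ((n : ℂ) + 1)) with hc_def
  have hα' : (α : ℂ) ≠ 0 := by exact_mod_cast hα.ne'
  have hn1 : ((n : ℂ) + 1) ≠ 0 := Nat.cast_add_one_ne_zero n
  have hc : c ≠ 0 := by
    simp only [hc_def, neg_ne_zero]
    exact div_ne_zero hα' hn1
  constructor
  · intro z
    rw [deriv_M, key n α hα z]
    ring
  · intro z hz
    have hM : M n α = fun w => c * Md (n + 1) (α - 1) w := funext fun w => key n α hα w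
    have hg' : deriv (M (n + 1) (α - 1)) = Md (n + 1) (α - 1) :=
      funext fun w => deriv_M _ _ w
    have h2 : iteratedDeriv 2 (M (n + 1) (α - 1)) z = deriv (Md (n + 1) (α - 1)) z := by
      rw [show (2 : ℕ) = 1 + 1 from rfl, iteratedDeriv_succ, iteratedDeriv_one, hg']
    have hderivMn : deriv (M n α) z = c * deriv (Md (n + 1) (α - 1)) z := by
      rw [hM, deriv_const_mul _ (Md_diff (n + 1) (α - 1) z)]
    have hprod : deriv (fun w => w * M n α w) z = M n α z + z * deriv (M n α) z := by
      have h := ((hasDerivAt_id z).mul (M_hasDerivAt n α z)).deriv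
      simp only [Pi.mul_def, id_eq, one_mul] at h
      rw [deriv_M n α z, h]
    set S := Md (n + 1) (α - 1) z with hS_def
    set S' := deriv (Md (n + 1) (α - 1)) z with hS'_def
    have hMz : M n α z = c * S := key n α hα z
    have hzne : z ≠ 0 := fun h => hz (by simp [h])
    have hSne : S ≠ 0 := by
      intro h
      apply hz
      rw [hMz, h, mul_zero, mul_zero]
    rw [hprod, hg', h2, hMz, hderivMn]
    have hSne' : Md (n + 1) (α - 1) z ≠ 0 := hSne
    field_simp
    ring
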